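/- arXiv:1606.06946 — 2 statements merged into one kernel-verified Lean document; each statement's English description precedes it below -/
import Mathlib

section
/- The tidal angular acceleration TIDE is continuously differentiable (of class C¹) on ℝ and bounded: there exists B > 0 with |TIDE(v)| ≤ B for all real v. -/
/-!
The dissipation function is the odd extension `x ↦ P₂(|x|) sgn x` of `P₂` from `[0, ∞)`, and
`P₂(0) = 0`. Such an extension is `C¹` as soon as `P₂` is continuous at `0` and `P₂'` extends
continuously from `(0, ∞)` to `[0, ∞)`: the derivative at `0` then exists and equals the limit.
The factor `χ^{-α}` in `𝓘'` and `𝓡'` blows up at `0`, but in the quotient rule for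
`P₂ = 𝓘 χ / ((𝓡 + A₂ χ)² + 𝓘²)` it only appears multiplied by `χ`, so `P₂'` is a rational
expression in `𝓘, 𝓡` and the Euler derivatives `χ 𝓘', χ 𝓡'`, all continuous on `[0, ∞)`, over a
denominator bounded below by `𝓘² ≥ 1 / τ_M²`.

For boundedness, `𝓡 + A₂ χ ≥ χ`, so `|P₂| ≤ |𝓘| (𝓡 + A₂ χ) / ((𝓡 + A₂ χ)² + 𝓘²) ≤ 1/2` by AM–GM,
and `|TIDE| ≤ |η| Σ G_q² / 2`.
-/

open Real Set Filter Topology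

/-- The function 𝓡(χ) from the NFME model. -/
noncomputable def Rfun (τA α χ : ℝ) : ℝ :=
  χ + χ ^ (1 - α) * τA ^ (-α) * Real.cos (α * Real.pi / 2) * Real.Gamma (α + 1)

/-- The function 𝓘(χ) from the NFME model. -/
noncomputable def Ifun (τA τM α χ : ℝ) : ℝ :=
  -1 / τM - χ ^ (1 - α) * τA ^ (-α) * Real.sin (α * Real.pi / 2) * Real.Gamma (α + 1)

/-- The function P₂(χ) from the NFME model. -/
noncomputable def P2 (τA τM A2 α χ : ℝ) : ℝ :=
  Ifun τA τM α χ * χ / ((Rfun τA α χ + A2 * χ) ^ 2 + (Ifun τA τM α χ) ^ 2)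

/-- The NFME dissipation function f(x) = P₂(|x|)·sgn(x). -/
noncomputable def nfmeF (τA τM A2 α x : ℝ) : ℝ :=
  P2 τA τM A2 α |x| * Real.sign x

/-- The tidal angular acceleration TIDE(v) = −η Σ_{q=−1}^{7} G_q² f((q+2)n − 2v). -/
noncomputable def TIDE (τA τM A2 α n η : ℝ) (G : ℤ → ℝ) (v : ℝ) : ℝ :=
  -η * ∑ q ∈ Finset.Icc (-1 : ℤ) 7, (G q) ^ 2 * nfmeF τA τM A2 α (((q : ℝ) + 2) * n - 2 * v)

theorem contDiff_one_comp_abs_mul_sign {P P' : ℝ → ℝ} (h0 : P 0 = 0)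
    (hP : ContinuousWithinAt P (Ici 0) 0) (hP' : ContinuousOn P' (Ici 0))
    (hderiv : ∀ χ > 0, HasDerivAt P (P' χ) χ) :
    ContDiff ℝ 1 fun x => P |x| * sign x := by
  set F : ℝ → ℝ := fun x => P |x| * sign x
  have hP'abs : Continuous fun x => P' |x| :=
    hP'.comp_continuous continuous_abs fun x => abs_nonneg x
  have hF_ne : ∀ x ≠ 0, HasDerivAt F (P' |x|) x := by
    intro x hx
    rcases hx.lt_or_gt with hneg | hpos
    · have h := ((hderiv (-x) (neg_pos.2 hneg)).comp x (hasDerivAt_neg x)).neg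
      rw [abs_of_neg hneg]
      refine (h.congr_deriv (by ring)).congr_of_eventuallyEq ?_
      filter_upwards [eventually_lt_nhds hneg] with y hy
      simp [F, abs_of_neg hy, sign_of_neg hy]
    · rw [abs_of_pos hpos]
      refine (hderiv x hpos).congr_of_eventuallyEq ?_
      filter_upwards [eventually_gt_nhds hpos] with y hy
      simp [F, abs_of_pos hy, sign_of_pos hy]
  have hF_cont : ContinuousAt F 0 := by
    have habs : Tendsto (fun x : ℝ => |x|) (𝓝 0) (𝓝[Ici 0] 0) :=
      tendsto_nhdsWithin_of_tendsto_nhds_of_eventually_within _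
        (continuous_abs.tendsto' 0 0 abs_zero) (.of_forall fun x => abs_nonneg x)
    have hPabs : Tendsto (fun x => P |x|) (𝓝 0) (𝓝 0) := (h0 ▸ hP.tendsto).comp habs
    refine (squeeze_zero_norm (fun x => ?_) (by simpa using hPabs.norm)).trans (by simp [F, h0])
    rcases sign_apply_eq x with h | h | h <;> simp [F, h]
  have hF : ∀ x, HasDerivAt F (P' |x|) x :=
    hasDerivAt_of_hasDerivAt_of_ne' hF_ne hF_cont hP'abs.continuousAt
  rw [contDiff_one_iff_deriv]
  exact ⟨fun x => (hF x).differentiableAt, by rw [funext fun x => (hF x).deriv]; exact hP'abs⟩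

theorem abs_mul_div_sq_add_sq_le_half {a b χ : ℝ} (hχ : 0 ≤ χ) (ha : χ ≤ a) :
    |b * χ / (a ^ 2 + b ^ 2)| ≤ 1 / 2 := by
  rcases (add_nonneg (sq_nonneg a) (sq_nonneg b)).eq_or_lt with hD | hD
  · simp [← hD]
  rw [abs_div, abs_mul, abs_of_nonneg hχ, abs_of_pos hD, div_le_iff₀ hD]
  nlinarith [sq_nonneg (a - |b|), sq_abs b, mul_le_mul_of_nonneg_left ha (abs_nonneg b)]

theorem HasDerivAt.mul_id_div_sq_add_sq {I R : ℝ → ℝ} {A χ eI eR : ℝ} (hχ : χ ≠ 0)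
    (hI : HasDerivAt I (eI / χ) χ) (hR : HasDerivAt R (eR / χ) χ)
    (hD : (R χ + A * χ) ^ 2 + I χ ^ 2 ≠ 0) :
    HasDerivAt (fun y => I y * y / ((R y + A * y) ^ 2 + I y ^ 2))
      (((eI + I χ) * ((R χ + A * χ) ^ 2 + I χ ^ 2)
          - I χ * (2 * (R χ + A * χ) * (eR + A * χ) + 2 * I χ * eI))
        / ((R χ + A * χ) ^ 2 + I χ ^ 2) ^ 2) χ := by
  have hRA : HasDerivAt (fun y => R y + A * y) (eR / χ + A * 1) χ :=
    hR.add ((hasDerivAt_id' χ).const_mul A)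
  have hN : HasDerivAt (fun y => I y * y) (eI / χ * χ + I χ * 1) χ := hI.mul (hasDerivAt_id' χ)
  have hDen : HasDerivAt (fun y => (R y + A * y) ^ 2 + I y ^ 2)
      (2 * (R χ + A * χ) * (eR / χ + A * 1) + 2 * I χ * (eI / χ)) χ :=
    ((hRA.pow 2).add (hI.pow 2)).congr_deriv (by push_cast; ring)
  refine (hN.div hDen hD).congr_deriv ?_
  field_simp

theorem hasDerivAt_rpow_const_of_pos {χ : ℝ} (hχ : 0 < χ) (p : ℝ) :
    HasDerivAt (fun y => y ^ p) (p * χ ^ p / χ) χ := by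
  simpa [rpow_sub_one hχ.ne', mul_div_assoc] using hasDerivAt_rpow_const (p := p) (Or.inl hχ.ne')

section NFME

variable {τA τM A2 α : ℝ}

noncomputable def IfunEuler (τA α χ : ℝ) : ℝ :=
  -((1 - α) * χ ^ (1 - α) * τA ^ (-α) * sin (α * π / 2) * Gamma (α + 1))

noncomputable def RfunEuler (τA α χ : ℝ) : ℝ :=
  χ + (1 - α) * χ ^ (1 - α) * τA ^ (-α) * cos (α * π / 2) * Gamma (α + 1)

noncomputable def Dfun (τA τM A2 α χ : ℝ) : ℝ :=
  (Rfun τA α χ + A2 * χ) ^ 2 + Ifun τA τM α χ ^ 2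

noncomputable def P2deriv (τA τM A2 α χ : ℝ) : ℝ :=
  ((IfunEuler τA α χ + Ifun τA τM α χ) * Dfun τA τM A2 α χ
      - Ifun τA τM α χ * (2 * (Rfun τA α χ + A2 * χ) * (RfunEuler τA α χ + A2 * χ)
        + 2 * Ifun τA τM α χ * IfunEuler τA α χ))
    / Dfun τA τM A2 α χ ^ 2

theorem hasDerivAt_Ifun {χ : ℝ} (hχ : 0 < χ) :
    HasDerivAt (Ifun τA τM α) (IfunEuler τA α χ / χ) χ := by
  have h := ((((hasDerivAt_rpow_const_of_pos hχ (1 - α)).mul_const (τA ^ (-α))).mul_const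
    (sin (α * π / 2))).mul_const (Gamma (α + 1))).const_sub (-1 / τM)
  exact h.congr_deriv (by simp only [IfunEuler]; ring)

theorem hasDerivAt_Rfun {χ : ℝ} (hχ : 0 < χ) :
    HasDerivAt (Rfun τA α) (RfunEuler τA α χ / χ) χ := by
  have h := (hasDerivAt_id χ).add ((((hasDerivAt_rpow_const_of_pos hχ (1 - α)).mul_const
    (τA ^ (-α))).mul_const (cos (α * π / 2))).mul_const (Gamma (α + 1)))
  exact h.congr_deriv (by simp only [RfunEuler]; field_simp)

theorem Ifun_neg (hτA : 0 < τA) (hτM : 0 < τM) (hα0 : 0 ≤ α) (hα1 : α ≤ 1) {χ : ℝ}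
    (hχ : 0 ≤ χ) : Ifun τA τM α χ < 0 := by
  have hsin : 0 ≤ sin (α * π / 2) :=
    sin_nonneg_of_nonneg_of_le_pi (by positivity) (by nlinarith [pi_pos])
  have : 0 ≤ χ ^ (1 - α) * τA ^ (-α) * sin (α * π / 2) * Gamma (α + 1) := by
    have := Gamma_pos_of_pos (by linarith : 0 < α + 1)
    positivity
  have : 0 < 1 / τM := by positivity
  rw [Ifun, neg_div]
  linarith

theorem le_Rfun (hτA : 0 < τA) (hα0 : 0 ≤ α) (hα1 : α ≤ 1) {χ : ℝ} (hχ : 0 ≤ χ) :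
    χ ≤ Rfun τA α χ := by
  have hcos : 0 ≤ cos (α * π / 2) :=
    cos_nonneg_of_mem_Icc ⟨by nlinarith [pi_pos], by nlinarith [pi_pos]⟩
  have : 0 ≤ χ ^ (1 - α) * τA ^ (-α) * cos (α * π / 2) * Gamma (α + 1) := by
    have := Gamma_pos_of_pos (by linarith : 0 < α + 1)
    positivity
  rw [Rfun]
  linarith

theorem Dfun_pos (hτA : 0 < τA) (hτM : 0 < τM) (hα0 : 0 ≤ α) (hα1 : α ≤ 1) {χ : ℝ}
    (hχ : 0 ≤ χ) : 0 < Dfun τA τM A2 α χ :=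
  add_pos_of_nonneg_of_pos (sq_nonneg _) (sq_pos_of_neg (Ifun_neg hτA hτM hα0 hα1 hχ))

theorem hasDerivAt_P2 (hτA : 0 < τA) (hτM : 0 < τM) (hα0 : 0 ≤ α) (hα1 : α ≤ 1) {χ : ℝ}
    (hχ : 0 < χ) : HasDerivAt (P2 τA τM A2 α) (P2deriv τA τM A2 α χ) χ :=
  HasDerivAt.mul_id_div_sq_add_sq hχ.ne' (hasDerivAt_Ifun hχ) (hasDerivAt_Rfun hχ)
    (Dfun_pos hτA hτM hα0 hα1 hχ.le).ne'

theorem continuousOn_P2 (hτA : 0 < τA) (hτM : 0 < τM) (hα0 : 0 ≤ α) (hα1 : α ≤ 1) :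
    ContinuousOn (P2 τA τM A2 α) (Ici 0) := by
  refine ContinuousOn.div ?_ ?_ fun χ hχ => (Dfun_pos hτA hτM hα0 hα1 hχ).ne'
  all_goals
    simp only [Rfun, Ifun]
    fun_prop (disch := linarith)

theorem continuousOn_P2deriv (hτA : 0 < τA) (hτM : 0 < τM) (hα0 : 0 ≤ α) (hα1 : α ≤ 1) :
    ContinuousOn (P2deriv τA τM A2 α) (Ici 0) := by
  refine ContinuousOn.div ?_ ?_ fun χ hχ => (pow_pos (Dfun_pos hτA hτM hα0 hα1 hχ) 2).ne'
  all_goals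
    simp only [Dfun, Rfun, Ifun, IfunEuler, RfunEuler]
    fun_prop (disch := linarith)

theorem contDiff_nfmeF (hτA : 0 < τA) (hτM : 0 < τM) (hα0 : 0 ≤ α) (hα1 : α ≤ 1) :
    ContDiff ℝ 1 (nfmeF τA τM A2 α) :=
  contDiff_one_comp_abs_mul_sign (by simp [P2])
    ((continuousOn_P2 hτA hτM hα0 hα1).continuousWithinAt self_mem_Ici)
    (continuousOn_P2deriv hτA hτM hα0 hα1) fun _ hχ => hasDerivAt_P2 hτA hτM hα0 hα1 hχ

theorem abs_nfmeF_le_half (hτA : 0 < τA) (hA2 : 0 ≤ A2) (hα0 : 0 ≤ α) (hα1 : α ≤ 1) (x : ℝ) :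
    |nfmeF τA τM A2 α x| ≤ 1 / 2 := by
  have hP : |P2 τA τM A2 α (|x|)| ≤ 1 / 2 :=
    abs_mul_div_sq_add_sq_le_half (abs_nonneg x)
      (le_add_of_le_of_nonneg (le_Rfun hτA hα0 hα1 (abs_nonneg x)) (by positivity))
  rw [nfmeF, abs_mul]
  rcases sign_apply_eq x with h | h | h <;> simp [h] <;> linarith

end NFME

section TIDE

variable {τA τM A2 α n η : ℝ} {G : ℤ → ℝ}

theorem contDiff_TIDE {k : WithTop ℕ∞} (hf : ContDiff ℝ k (nfmeF τA τM A2 α)) :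
    ContDiff ℝ k (TIDE τA τM A2 α n η G) := by
  unfold TIDE
  fun_prop

theorem abs_TIDE_le {M : ℝ} (hf : ∀ x, |nfmeF τA τM A2 α x| ≤ M) (v : ℝ) :
    |TIDE τA τM A2 α n η G v| ≤ |η| * (∑ q ∈ Finset.Icc (-1 : ℤ) 7, G q ^ 2) * M := by
  rw [TIDE, abs_mul, abs_neg, mul_assoc, Finset.sum_mul]
  refine mul_le_mul_of_nonneg_left ((Finset.abs_sum_le_sum_abs _ _).trans
    (Finset.sum_le_sum fun q _ => ?_)) (abs_nonneg η)
  rw [abs_mul, abs_of_nonneg (sq_nonneg _)]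
  exact mul_le_mul_of_nonneg_left (hf _) (sq_nonneg _)

end TIDE

theorem TIDE_contDiff_and_bounded_general (τA τM A2 α n η : ℝ) (G : ℤ → ℝ)
    (hτA : 0 < τA) (hτM : 0 < τM) (hA2 : 0 < A2) (hα0 : 0 < α) (hα1 : α < 1) :
    ContDiff ℝ 1 (TIDE τA τM A2 α n η G) ∧
    ∃ B : ℝ, 0 < B ∧ ∀ v : ℝ, |TIDE τA τM A2 α n η G v| ≤ B := by
  refine ⟨contDiff_TIDE (contDiff_nfmeF hτA hτM hα0.le hα1.le),
    |η| * (∑ q ∈ Finset.Icc (-1 : ℤ) 7, G q ^ 2) * (1 / 2) + 1, by positivity, fun v => ?_⟩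
  exact (abs_TIDE_le (abs_nfmeF_le_half hτA hA2.le hα0.le hα1.le) v).trans
    (le_add_of_nonneg_right zero_le_one)

/-- The tidal angular acceleration TIDE is C¹ on ℝ and bounded. -/
theorem TIDE_contDiff_and_bounded (τA τM A2 α n η : ℝ) (G : ℤ → ℝ)
    (hτA : 0 < τA) (hτM : 0 < τM) (hA2 : 0 < A2) (hα0 : 0 < α) (hα1 : α < 1)
    (hn : 0 < n) (hη : 0 ≤ η) :
    ContDiff ℝ 1 (TIDE τA τM A2 α n η G) ∧
    ∃ B : ℝ, 0 < B ∧ ∀ v : ℝ, |TIDE τA τM A2 α n η G v| ≤ B :=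
  TIDE_contDiff_and_bounded_general τA τM A2 α n η G hτA hτM hA2 hα0 hα1
end

section
/- The tidal acceleration has a kink at each half-integer multiple of the mean motion: if η > 0 and G_q ≠ 0 for some q ∈ {−1, …, 7}, then the derivative of TIDE (which exists and is continuous on ℝ) is not differentiable at v = (q+2)n/2; i.e. TIDE is C¹ but not twice differentiable at v = (q+2)n/2. -/
open Real Set Filter Topology

/-!
Treating `χ ^ (1 - α)` as an independent variable `b`, the dissipation function becomes
`f x = x * Φ (|x|, |x| ^ (1 - α))` with `Φ` a rational function of `(a, b)`, smooth near the
quadrant `a, b ≥ 0`. The chain rule gives `f' x = Φ p + DΦ p (|x|, (1 - α) |x| ^ (1 - α))` with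
`p = (|x|, |x| ^ (1 - α))`, which is continuous; so `f` is `C¹`, and it is smooth away from `0`.
At `0`, `f' 0 = Φ (0, 0) = -τ_M` and
`(f x - f' 0 * x) / x² = (Φ p + τ_M) / x ~ τ_A^(-α) sin(απ/2) Γ(α+1) τ_M² x^(-α) → ∞`,
which by L'Hôpital's rule rules out a second derivative at `0`. In `TIDE`, the `q`-th term is the
only one whose argument `(q + 2) n - 2 v` vanishes at `v = (q + 2) n / 2`, so the kink survives.
-/

theorem not_differentiableAt_deriv_of_tendsto_atTop {f : ℝ → ℝ} {a : ℝ}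
    (hf : ∀ᶠ x in 𝓝 a, DifferentiableAt ℝ f x)
    (h : Tendsto (fun x => (f x - f a - deriv f a * (x - a)) / (x - a) ^ 2) (𝓝[>] a) atTop) :
    ¬ DifferentiableAt ℝ (deriv f) a := by
  intro hf'
  -- L'Hôpital: the quotient would tend to `f'' a / 2`
  refine not_tendsto_nhds_of_tendsto_atTop h (deriv (deriv f) a / 2) ?_
  have hcont : ContinuousAt f a := hf.self_of_nhds.continuousAt
  refine HasDerivAt.lhopital_zero_nhdsGT (f' := fun x => deriv f x - deriv f a)
    (g' := fun x => 2 * (x - a)) ?_ ?_ ?_ ?_ ?_ ?_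
  · filter_upwards [nhdsWithin_le_nhds hf] with x hx
    simpa using (hx.hasDerivAt.sub_const (f a)).fun_sub
      (((hasDerivAt_id x).sub_const a).const_mul (deriv f a))
  · refine Eventually.of_forall fun x => ?_
    simpa using ((hasDerivAt_id x).sub_const a).fun_pow 2
  · filter_upwards [self_mem_nhdsWithin] with x (hx : a < x)
    exact mul_ne_zero two_ne_zero (sub_ne_zero.mpr hx.ne')
  · have : ContinuousAt (fun x => f x - f a - deriv f a * (x - a)) a := by fun_prop
    simpa using this.tendsto.mono_left nhdsWithin_le_nhds
  · have : ContinuousAt (fun x : ℝ => (x - a) ^ 2) a := by fun_prop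
    simpa using this.tendsto.mono_left nhdsWithin_le_nhds
  · have hslope := (hasDerivAt_iff_tendsto_slope.mp hf'.hasDerivAt).div_const 2
    refine (hslope.mono_left (nhdsWithin_mono _ fun x (hx : a < x) => hx.ne')).congr' ?_
    filter_upwards [self_mem_nhdsWithin] with x (hx : a < x)
    rw [slope_def_field]
    field_simp

theorem not_differentiableAt_sum_comp_of_kink {ι : Type*} [DecidableEq ι] {s : Finset ι}
    {w c : ι → ℝ} {g : ℝ → ℝ} {b : ℝ} {j : ι} (hj : j ∈ s) (hwj : w j ≠ 0) (hb : b ≠ 0)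
    (hc : ∀ i ∈ s, i ≠ j → c i ≠ c j) (hg : ∀ x ≠ 0, DifferentiableAt ℝ g x)
    (hg0 : ¬ DifferentiableAt ℝ g 0) :
    ¬ DifferentiableAt ℝ (fun v => ∑ i ∈ s, w i * g (c i - b * v)) (c j / b) := by
  intro H
  have hrest : DifferentiableAt ℝ (fun v => ∑ i ∈ s.erase j, w i * g (c i - b * v)) (c j / b) := by
    refine DifferentiableAt.fun_sum fun i hi => ((hg _ ?_).comp _ (by fun_prop)).const_mul _
    rw [mul_div_cancel₀ _ hb]
    exact sub_ne_zero.mpr (hc i (Finset.mem_of_mem_erase hi) (Finset.ne_of_mem_erase hi))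
  have hj' : DifferentiableAt ℝ (fun v => w j * g (c j - b * v)) ((c j - 0) / b) := by
    rw [sub_zero]
    refine (H.fun_sub hrest).congr_of_eventuallyEq (Eventually.of_forall fun v => ?_)
    dsimp only
    rw [← Finset.add_sum_erase s _ hj]
    ring
  have hφ : DifferentiableAt ℝ (fun x => (c j - x) / b) 0 := by fun_prop
  apply hg0
  refine ((hj'.comp 0 hφ).const_mul (w j)⁻¹).congr_of_eventuallyEq
    (Eventually.of_forall fun x => ?_)
  simp only [Function.comp_apply, mul_div_cancel₀ _ hb, sub_sub_cancel, inv_mul_cancel_left₀ hwj]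

noncomputable def radialMul (Φ : ℝ × ℝ → ℝ) (β x : ℝ) : ℝ := x * Φ (|x|, |x| ^ β)

section RadialMul

variable {Φ : ℝ × ℝ → ℝ} {β : ℝ}

theorem contDiffAt_radialMul {n : ℕ∞} {x : ℝ} (hx : x ≠ 0)
    (hΦ : ContDiffAt ℝ n Φ (|x|, |x| ^ β)) : ContDiffAt ℝ n (radialMul Φ β) x := by
  have habs : ContDiffAt ℝ n (|·|) x := contDiffAt_abs hx
  exact contDiffAt_id.mul (hΦ.comp x (habs.prodMk (habs.rpow_const_of_ne (abs_ne_zero.mpr hx))))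

theorem hasDerivAt_radialMul_zero (hβ : 0 < β) (hΦ : ContinuousAt Φ (0, 0)) :
    HasDerivAt (radialMul Φ β) (Φ (0, 0)) 0 := by
  have hγ : Tendsto (fun x : ℝ => (|x|, |x| ^ β)) (𝓝 0) (𝓝 (0, 0)) := by
    have : Continuous (fun x : ℝ => (|x|, |x| ^ β)) := by
      fun_prop (disch := exact hβ.le)
    simpa [Real.zero_rpow hβ.ne'] using this.tendsto 0
  rw [hasDerivAt_iff_tendsto_slope]
  refine ((hΦ.tendsto.comp hγ).mono_left nhdsWithin_le_nhds).congr' ?_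
  filter_upwards [self_mem_nhdsWithin] with x (hx : x ≠ 0)
  simp [slope_def_field, radialMul, hx]

theorem hasDerivAt_radialMul (hβ : 0 < β) (hΦ : ∀ χ, 0 ≤ χ → DifferentiableAt ℝ Φ (χ, χ ^ β))
    (x : ℝ) : HasDerivAt (radialMul Φ β)
      (Φ (|x|, |x| ^ β) + fderiv ℝ Φ (|x|, |x| ^ β) (|x|, β * |x| ^ β)) x := by
  rcases eq_or_ne x 0 with rfl | hx
  · have hΦ0 := (hΦ 0 le_rfl).continuousAt
    rw [Real.zero_rpow hβ.ne'] at hΦ0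
    convert hasDerivAt_radialMul_zero hβ hΦ0 using 1
    simp [Real.zero_rpow hβ.ne', Prod.mk_zero_zero]
  have habs := hasDerivAt_abs hx
  have hγ := habs.prodMk (habs.rpow_const (p := β) (Or.inl (abs_ne_zero.mpr hx)))
  refine ((hasDerivAt_id' x).fun_mul
    ((hΦ _ (abs_nonneg x)).hasFDerivAt.comp_hasDerivAt x hγ)).congr_deriv ?_
  rw [one_mul, Function.comp_apply, ← smul_eq_mul x, ← ContinuousLinearMap.map_smul]
  congr 2
  ext <;> simp only [Prod.smul_mk, smul_eq_mul]
  · exact self_mul_sign x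
  · rw [show x * (SignType.sign x * β * |x| ^ (β - 1))
        = β * (x * SignType.sign x * |x| ^ (β - 1)) by ring,
      self_mul_sign, Real.rpow_sub_one (abs_ne_zero.mpr hx), mul_div_cancel₀ _ (abs_ne_zero.mpr hx)]

theorem contDiff_one_radialMul (hβ : 0 < β) (hΦ : ∀ χ, 0 ≤ χ → ContDiffAt ℝ 1 Φ (χ, χ ^ β)) :
    ContDiff ℝ 1 (radialMul Φ β) := by
  have hd := hasDerivAt_radialMul hβ fun χ hχ => (hΦ χ hχ).differentiableAt one_ne_zero
  rw [contDiff_one_iff_deriv, funext fun x => (hd x).deriv]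
  refine ⟨fun x => (hd x).differentiableAt, continuous_iff_continuousAt.mpr fun x => ?_⟩
  have hγ : Continuous (fun x : ℝ => (|x|, |x| ^ β)) := by fun_prop (disch := exact hβ.le)
  have hv : Continuous (fun x : ℝ => (|x|, β * |x| ^ β)) := by fun_prop (disch := exact hβ.le)
  have hΦx := hΦ _ (abs_nonneg x)
  exact (hΦx.continuousAt.comp (x := x) hγ.continuousAt).add
    (((hΦx.continuousAt_fderiv one_ne_zero).comp (x := x) hγ.continuousAt).clm_apply
      hv.continuousAt)

theorem differentiableAt_deriv_radialMul {x : ℝ} (hx : x ≠ 0)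
    (hΦ : ContDiffAt ℝ 2 Φ (|x|, |x| ^ β)) : DifferentiableAt ℝ (deriv (radialMul Φ β)) x :=
  ((contDiffAt_radialMul hx hΦ).derivWithin (m := 1) le_rfl).differentiableAt one_ne_zero

theorem not_differentiableAt_deriv_radialMul_zero (hβ : 0 < β)
    (hΦ : ∀ χ, 0 ≤ χ → DifferentiableAt ℝ Φ (χ, χ ^ β))
    (h : Tendsto (fun χ => (Φ (χ, χ ^ β) - Φ (0, 0)) / χ) (𝓝[>] 0) atTop) :
    ¬ DifferentiableAt ℝ (deriv (radialMul Φ β)) 0 := by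
  have hd := hasDerivAt_radialMul hβ hΦ
  refine not_differentiableAt_deriv_of_tendsto_atTop
    (Eventually.of_forall fun x => (hd x).differentiableAt) (h.congr' ?_)
  filter_upwards [self_mem_nhdsWithin] with χ (hχ : 0 < χ)
  have hΦ0 := (hΦ 0 le_rfl).continuousAt
  rw [Real.zero_rpow hβ.ne'] at hΦ0
  rw [(hasDerivAt_radialMul_zero hβ hΦ0).deriv]
  simp only [radialMul, abs_of_pos hχ, abs_zero, zero_mul]
  field_simp [hχ.ne']
  ring

end RadialMul

noncomputable def nfmeSinCoeff (τA α : ℝ) : ℝ := τA ^ (-α) * sin (α * π / 2) * Gamma (α + 1)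

noncomputable def nfmeCosCoeff (τA α : ℝ) : ℝ := τA ^ (-α) * cos (α * π / 2) * Gamma (α + 1)

noncomputable def nfmeDenom (τA τM A2 α : ℝ) (p : ℝ × ℝ) : ℝ :=
  ((1 + A2) * p.1 + p.2 * nfmeCosCoeff τA α) ^ 2 + (-1 / τM - p.2 * nfmeSinCoeff τA α) ^ 2

/-- `nfmeQuot τA τM A2 α (χ, χ ^ (1 - α)) = 𝓘(χ) / ((𝓡(χ) + A₂χ)² + 𝓘(χ)²) = P₂(χ) / χ`. -/
noncomputable def nfmeQuot (τA τM A2 α : ℝ) (p : ℝ × ℝ) : ℝ :=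
  (-1 / τM - p.2 * nfmeSinCoeff τA α) / nfmeDenom τA τM A2 α p

section NFME

variable {τA τM A2 α : ℝ}

theorem abs_mul_real_sign (x : ℝ) : |x| * Real.sign x = x := by
  rcases lt_trichotomy x 0 with hx | rfl | hx
  · rw [abs_of_neg hx, Real.sign_of_neg hx]; ring
  · simp
  · rw [abs_of_pos hx, Real.sign_of_pos hx]; ring

theorem nfmeF_eq_radialMul (τA τM A2 α : ℝ) :
    nfmeF τA τM A2 α = radialMul (nfmeQuot τA τM A2 α) (1 - α) := by
  funext x
  calc nfmeF τA τM A2 α x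
      = (|x| * Real.sign x) * nfmeQuot τA τM A2 α (|x|, |x| ^ (1 - α)) := by
        simp only [nfmeF, P2, Ifun, Rfun, nfmeQuot, nfmeDenom, nfmeSinCoeff, nfmeCosCoeff]
        ring
    _ = radialMul (nfmeQuot τA τM A2 α) (1 - α) x := by rw [abs_mul_real_sign, radialMul]

theorem nfmeSinCoeff_pos (hτA : 0 < τA) (hα0 : 0 < α) (hα1 : α < 1) : 0 < nfmeSinCoeff τA α := by
  have hsin : 0 < sin (α * π / 2) := sin_pos_of_pos_of_lt_pi (by positivity) (by nlinarith [pi_pos])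
  have hΓ : 0 < Gamma (α + 1) := Gamma_pos_of_pos (by linarith)
  have hτ : 0 < τA ^ (-α) := rpow_pos_of_pos hτA _
  unfold nfmeSinCoeff
  positivity

theorem nfmeDenom_pos (hτM : 0 < τM) (hS : 0 ≤ nfmeSinCoeff τA α) {p : ℝ × ℝ} (hp : 0 ≤ p.2) :
    0 < nfmeDenom τA τM A2 α p := by
  have hI : -1 / τM - p.2 * nfmeSinCoeff τA α < 0 := by
    have : 0 < 1 / τM := by positivity
    rw [neg_div]
    nlinarith [mul_nonneg hp hS]
  unfold nfmeDenom
  nlinarith [sq_nonneg ((1 + A2) * p.1 + p.2 * nfmeCosCoeff τA α), mul_pos_of_neg_of_neg hI hI]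

theorem contDiffAt_nfmeQuot {n : WithTop ℕ∞} (hτM : 0 < τM) (hS : 0 ≤ nfmeSinCoeff τA α)
    {p : ℝ × ℝ} (hp : 0 ≤ p.2) : ContDiffAt ℝ n (nfmeQuot τA τM A2 α) p := by
  unfold nfmeQuot nfmeDenom
  exact ContDiffAt.div (by fun_prop) (by fun_prop) (nfmeDenom_pos hτM hS hp).ne'

theorem nfmeDenom_zero : nfmeDenom τA τM A2 α (0, 0) = 1 / τM ^ 2 := by
  simp only [nfmeDenom]
  ring

theorem nfmeQuot_zero (hτM : τM ≠ 0) : nfmeQuot τA τM A2 α (0, 0) = -τM := by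
  rw [nfmeQuot, nfmeDenom_zero]
  field_simp
  ring

theorem nfmeQuot_add_eq (hτM : τM ≠ 0) {p : ℝ × ℝ} (hD : nfmeDenom τA τM A2 α p ≠ 0) :
    nfmeQuot τA τM A2 α p + τM =
      (p.2 * (nfmeSinCoeff τA α + τM * (nfmeSinCoeff τA α ^ 2 + nfmeCosCoeff τA α ^ 2) * p.2
          + 2 * τM * (1 + A2) * nfmeCosCoeff τA α * p.1) + τM * (1 + A2) ^ 2 * p.1 ^ 2) /
        nfmeDenom τA τM A2 α p := by
  rw [nfmeQuot, div_add' _ _ _ hD]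
  congr 1
  simp only [nfmeDenom]
  field_simp
  ring

theorem tendsto_nfmeQuot_sub_div_atTop (hτA : 0 < τA) (hτM : 0 < τM) (hα0 : 0 < α)
    (hα1 : α < 1) :
    Tendsto (fun χ => (nfmeQuot τA τM A2 α (χ, χ ^ (1 - α)) - nfmeQuot τA τM A2 α (0, 0)) / χ)
      (𝓝[>] 0) atTop := by
  set S := nfmeSinCoeff τA α
  set C := nfmeCosCoeff τA α
  set D := nfmeDenom τA τM A2 α
  let K : ℝ × ℝ → ℝ := fun p => S + τM * (S ^ 2 + C ^ 2) * p.2 + 2 * τM * (1 + A2) * C * p.1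
  have hS : 0 < S := nfmeSinCoeff_pos hτA hα0 hα1
  have hD0 : D (0, 0) ≠ 0 := (nfmeDenom_pos hτM hS.le le_rfl).ne'
  have hDc : ContinuousAt D (0, 0) := by unfold D nfmeDenom; fun_prop
  have hγ : Tendsto (fun χ : ℝ => (χ, χ ^ (1 - α))) (𝓝[>] 0) (𝓝 (0, 0)) := by
    have : Continuous (fun χ : ℝ => (χ, χ ^ (1 - α))) := by fun_prop (disch := linarith)
    simpa [Real.zero_rpow (sub_ne_zero.mpr hα1.ne')] using
      (this.tendsto 0).mono_left nhdsWithin_le_nhds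
  have hK : Tendsto (fun χ => K (χ, χ ^ (1 - α)) / D (χ, χ ^ (1 - α))) (𝓝[>] 0)
      (𝓝 (S * τM ^ 2)) := by
    have hKD : K (0, 0) / D (0, 0) = S * τM ^ 2 := by
      simp only [K, D, nfmeDenom_zero]
      field_simp
      ring
    have hc : ContinuousAt (fun p => K p / D p) (0, 0) := ContinuousAt.div (by fun_prop) hDc hD0
    have h := hc.tendsto.comp hγ
    rwa [hKD] at h
  have hrem : Tendsto (fun χ => τM * (1 + A2) ^ 2 * χ / D (χ, χ ^ (1 - α))) (𝓝[>] 0) (𝓝 0) := by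
    have hc : ContinuousAt (fun p => τM * (1 + A2) ^ 2 * p.1 / D p) (0, 0) :=
      ContinuousAt.div (by fun_prop) hDc hD0
    have h := hc.tendsto.comp hγ
    rwa [mul_zero, zero_div] at h
  refine (((tendsto_rpow_neg_nhdsGT_zero (neg_lt_zero.mpr hα0)).atTop_mul_pos
    (by positivity) hK).atTop_add hrem).congr' ?_
  filter_upwards [self_mem_nhdsWithin] with χ (hχ : 0 < χ)
  have hD : D (χ, χ ^ (1 - α)) ≠ 0 := (nfmeDenom_pos hτM hS.le (rpow_nonneg hχ.le _)).ne'
  have hs : χ ^ (1 - α) = χ * χ ^ (-α) := by rw [sub_eq_add_neg, rpow_add hχ, rpow_one]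
  rw [nfmeQuot_zero hτM.ne', sub_neg_eq_add, nfmeQuot_add_eq hτM.ne' hD]
  simp only [K, S, C, D]
  rw [hs]
  field_simp

theorem contDiff_one_nfmeF (hτA : 0 < τA) (hτM : 0 < τM) (hα0 : 0 < α) (hα1 : α < 1) :
    ContDiff ℝ 1 (nfmeF τA τM A2 α) := by
  rw [nfmeF_eq_radialMul]
  exact contDiff_one_radialMul (by linarith) fun χ hχ =>
    contDiffAt_nfmeQuot hτM (nfmeSinCoeff_pos hτA hα0 hα1).le (rpow_nonneg hχ _)

theorem differentiableAt_deriv_nfmeF (hτA : 0 < τA) (hτM : 0 < τM) (hα0 : 0 < α) (hα1 : α < 1)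
    {x : ℝ} (hx : x ≠ 0) : DifferentiableAt ℝ (deriv (nfmeF τA τM A2 α)) x := by
  rw [nfmeF_eq_radialMul]
  exact differentiableAt_deriv_radialMul hx
    (contDiffAt_nfmeQuot hτM (nfmeSinCoeff_pos hτA hα0 hα1).le (rpow_nonneg (abs_nonneg x) _))

theorem not_differentiableAt_deriv_nfmeF_zero (hτA : 0 < τA) (hτM : 0 < τM) (hα0 : 0 < α)
    (hα1 : α < 1) : ¬ DifferentiableAt ℝ (deriv (nfmeF τA τM A2 α)) 0 := by
  rw [nfmeF_eq_radialMul]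
  exact not_differentiableAt_deriv_radialMul_zero (by linarith)
    (fun χ hχ => (contDiffAt_nfmeQuot hτM (nfmeSinCoeff_pos hτA hα0 hα1).le
      (rpow_nonneg hχ _)).differentiableAt one_ne_zero)
    (tendsto_nfmeQuot_sub_div_atTop hτA hτM hα0 hα1)

end NFME

theorem hasDerivAt_TIDE {τA τM A2 α n η : ℝ} {G : ℤ → ℝ}
    (hf : Differentiable ℝ (nfmeF τA τM A2 α)) (v : ℝ) :
    HasDerivAt (TIDE τA τM A2 α n η G) (∑ q ∈ Finset.Icc (-1 : ℤ) 7,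
      2 * η * G q ^ 2 * deriv (nfmeF τA τM A2 α) (((q : ℝ) + 2) * n - 2 * v)) v := by
  have h : ∀ q : ℤ, HasDerivAt (fun v => ((q : ℝ) + 2) * n - 2 * v) (-2) v := fun q => by
    simpa using ((hasDerivAt_id v).const_mul 2).const_sub (((q : ℝ) + 2) * n)
  refine ((HasDerivAt.fun_sum fun q _ =>
    ((hf _).hasDerivAt.comp v (h q)).const_mul (G q ^ 2)).const_mul (-η)).congr_deriv ?_
  rw [Finset.mul_sum]
  exact Finset.sum_congr rfl fun q _ => by ring

theorem TIDE_kink_general (τA τM A2 α n η : ℝ) (G : ℤ → ℝ) (q : ℤ)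
    (hτA : 0 < τA) (hτM : 0 < τM) (hα0 : 0 < α) (hα1 : α < 1)
    (hn : 0 < n) (hη : 0 < η) (hq : q ∈ Finset.Icc (-1 : ℤ) 7) (hG : G q ≠ 0) :
    ContDiff ℝ 1 (TIDE τA τM A2 α n η G) ∧
    ¬ DifferentiableAt ℝ (deriv (TIDE τA τM A2 α n η G)) (((q : ℝ) + 2) * n / 2) := by
  have hf := contDiff_one_nfmeF (A2 := A2) hτA hτM hα0 hα1
  have hTIDE := hasDerivAt_TIDE (n := n) (η := η) (G := G) (hf.differentiable one_ne_zero)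
  have hf' := hf.continuous_deriv_one
  rw [contDiff_one_iff_deriv, funext fun v => (hTIDE v).deriv]
  refine ⟨⟨fun v => (hTIDE v).differentiableAt, by fun_prop⟩, ?_⟩
  exact not_differentiableAt_sum_comp_of_kink (w := fun q => 2 * η * G q ^ 2)
    (c := fun q => ((q : ℝ) + 2) * n) hq (by positivity) two_ne_zero
    (fun i _ hi => by simpa [hn.ne'] using hi)
    (fun x hx => differentiableAt_deriv_nfmeF hτA hτM hα0 hα1 hx)
    (not_differentiableAt_deriv_nfmeF_zero hτA hτM hα0 hα1)

/-- The tidal acceleration has a kink at each half-integer multiple of the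
mean motion: if η > 0 and G_q ≠ 0 for some q ∈ {−1, …, 7}, then TIDE is C¹ on ℝ but its
derivative is not differentiable at v = (q+2)n/2. -/
theorem TIDE_kink (τA τM A2 α n η : ℝ) (G : ℤ → ℝ) (q : ℤ)
    (hτA : 0 < τA) (hτM : 0 < τM) (hA2 : 0 < A2) (hα0 : 0 < α) (hα1 : α < 1)
    (hn : 0 < n) (hη : 0 < η) (hq : q ∈ Finset.Icc (-1 : ℤ) 7) (hG : G q ≠ 0) :
    ContDiff ℝ 1 (TIDE τA τM A2 α n η G) ∧
    ¬ DifferentiableAt ℝ (deriv (TIDE τA τM A2 α n η G)) (((q : ℝ) + 2) * n / 2) :=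
  TIDE_kink_general τA τM A2 α n η G q hτA hτM hα0 hα1 hn hη hq hG
end
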